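/- arXiv:2506.07085 — 9 statements merged into one kernel-verified Lean document; each statement's English description precedes it below -/
import Mathlib

section
/- Let S and A be finite nonempty sets, d a probability vector on S, π(·|s) a probability vector on A for each s ∈ S, and ρ(s,a) = d(s)·π(a|s). Let r, r̃ : S×A → ℝ, write r^π(s) = Σ_a π(a|s)·r(s,a) and r̃^π(s) = Σ_a π(a|s)·r̃(s,a), and let α > 0, ε > 0. If α·LSE_S((r^π − r̃^π)/α) ≤ ε + α·log|S|, then Σ_{s,a} ρ(s,a)·r̃(s,a) ≥ Σ_{s,a} ρ(s,a)·r(s,a) + α·(H(d) − log|S|) − ε. (Weak duality direction of the state-entropy reward-robustness theorem.) -/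
/-!
For any weights `v`, Gibbs' variational inequality gives
`∑ d v + H(d) ≤ LSE(v)`; with `v = (r^π - r̃^π)/α` the constraint bounds the right-hand side by
`(ε + α log |S|)/α`, and `∑ d v` is exactly the gap between the two returns divided by `α`.
-/

open Real Finset

lemma mul_log_sub_mul_log_le_sub {p q : ℝ} (hp : 0 ≤ p) (hq : 0 < q) :
    p * log q - p * log p ≤ q - p := by
  rcases hp.eq_or_lt with rfl | hp
  · simpa using hq.le
  calc p * log q - p * log p = p * log (q / p) := by
        rw [log_div hq.ne' hp.ne']; ring
    _ ≤ p * (q / p - 1) := by gcongr; exact log_le_sub_one_of_pos (div_pos hq hp)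
    _ = q - p := by field_simp

lemma sum_mul_sub_sum_mul_log_le_log_sum_exp {S : Type*} [Fintype S] (d v : S → ℝ)
    (hd0 : ∀ s, 0 ≤ d s) (hd1 : ∑ s, d s = 1) :
    ∑ s, d s * v s - ∑ s, d s * log (d s) ≤ log (∑ s, exp (v s)) := by
  set Z := ∑ s, exp (v s)
  have hZ : 0 < Z := by
    obtain ⟨s, -⟩ := nonempty_of_sum_ne_zero (hd1.trans_ne one_ne_zero)
    exact sum_pos (fun s _ => exp_pos (v s)) ⟨s, mem_univ s⟩
  have hq : ∀ s, 0 < exp (v s) / Z := fun s => div_pos (exp_pos _) hZ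
  have hlog : ∀ s, log (exp (v s) / Z) = v s - log Z := fun s => by
    rw [log_div (exp_pos _).ne' hZ.ne', log_exp]
  -- the pointwise bound at the softmax `q = exp v / Z`; summed, its right side vanishes
  have hsum := sum_le_sum fun s (_ : s ∈ univ) =>
    mul_log_sub_mul_log_le_sub (hd0 s) (hq s)
  simp only [hlog, sum_sub_distrib, mul_sub, ← sum_div, ← sum_mul, hd1] at hsum
  rw [div_self hZ.ne'] at hsum
  linarith

lemma sum_sum_mul_mul_eq_sum_mul_sum {S A : Type*} [Fintype S] [Fintype A]
    (d : S → ℝ) (pol f : S → A → ℝ) :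
    ∑ s, ∑ a, (d s * pol s a) * f s a = ∑ s, d s * ∑ a, pol s a * f s a := by
  simp_rw [mul_assoc, mul_sum]

theorem stmt_1_general {S A : Type*} [Fintype S] [Fintype A]
    (d : S → ℝ) (pol : S → A → ℝ)
    (hd0 : ∀ s, 0 ≤ d s) (hd1 : ∑ s, d s = 1)
    (r rt : S → A → ℝ) (α ε : ℝ) (hα : 0 < α)
    (hcon : α * Real.log (∑ s, Real.exp
        (((∑ a, pol s a * r s a) - (∑ a, pol s a * rt s a)) / α))
      ≤ ε + α * Real.log (Fintype.card S)) :
    ∑ s, ∑ a, (d s * pol s a) * rt s a ≥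
      (∑ s, ∑ a, (d s * pol s a) * r s a)
        + α * ((-∑ s, d s * Real.log (d s)) - Real.log (Fintype.card S)) - ε := by
  set u : S → ℝ := fun s => (∑ a, pol s a * r s a) - (∑ a, pol s a * rt s a)
  have gibbs := mul_le_mul_of_nonneg_left
    (sum_mul_sub_sum_mul_log_le_log_sum_exp d (fun s => u s / α) hd0 hd1) hα.le
  have hscale : α * ∑ s, d s * (u s / α) = ∑ s, d s * u s := by
    rw [mul_sum]; exact sum_congr rfl fun s _ => by field_simp
  have hgap : ∑ s, d s * u s
      = ∑ s, ∑ a, (d s * pol s a) * r s a - ∑ s, ∑ a, (d s * pol s a) * rt s a := by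
    simp only [sum_sum_mul_mul_eq_sum_mul_sum, u, mul_sub, sum_sub_distrib]
  rw [mul_sub, hscale, hgap] at gibbs
  linarith

/-- **Weak duality direction of the state-entropy reward-robustness theorem.**
If the perturbed reward `rt` satisfies the LSE constraint over states, then the
perturbed return is lower bounded by the state-entropy regularized return. -/
theorem stmt_1 {S A : Type*} [Fintype S] [Nonempty S] [Fintype A] [Nonempty A]
    (d : S → ℝ) (pol : S → A → ℝ)
    (hd0 : ∀ s, 0 ≤ d s) (hd1 : ∑ s, d s = 1)
    (hpol0 : ∀ s a, 0 ≤ pol s a) (hpol1 : ∀ s, ∑ a, pol s a = 1)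
    (r rt : S → A → ℝ) (α ε : ℝ) (hα : 0 < α) (hε : 0 < ε)
    (hcon : α * Real.log (∑ s, Real.exp
        (((∑ a, pol s a * r s a) - (∑ a, pol s a * rt s a)) / α))
      ≤ ε + α * Real.log (Fintype.card S)) :
    ∑ s, ∑ a, (d s * pol s a) * rt s a ≥
      (∑ s, ∑ a, (d s * pol s a) * r s a)
        + α * ((-∑ s, d s * Real.log (d s)) - Real.log (Fintype.card S)) - ε :=
  stmt_1_general d pol hd0 hd1 r rt α ε hα hcon
end

section
/- Let S and A be finite nonempty sets, d a probability vector on S with d(s) > 0 for all s, π(·|s) a probability vector on A with π(a|s) > 0 for all (s,a), and ρ(s,a) = d(s)·π(a|s). Let r : S×A → ℝ and α > 0, ε > 0. Define the adversarial reward r̃*(s,a) = r(s,a) − α·log(d(s))/(|A|·π(a|s)) − ε − α·log|S|. Then r̃* satisfies the constraint α·LSE_S((r^π − (r̃*)^π)/α) = ε + α·log|S| (where r^π(s) = Σ_a π(a|s)·r(s,a)), and it attains the robust value: Σ_{s,a} ρ(s,a)·r̃*(s,a) = Σ_{s,a} ρ(s,a)·r(s,a) + α·(H(d) − log|S|) −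 ε. -/
open Real Finset

/-! Averaging `r̃*` over `π(·|s)` cancels the `1/π(a|s)` factor, so `(r̃*)^π(s) = r^π(s) − α log d(s) − (ε + α log |S|)`.
Hence `exp((r^π − (r̃*)^π)/α)` is `d(s)` times a constant, and the constraint holds because `∑ d = 1`;
averaging once more over `d` turns `−α log d` into `α H(d)`. -/

lemma sum_mul_sub_div_card_mul_sub {A : Type*} [Fintype A] [Nonempty A] (p f : A → ℝ)
    (hp0 : ∀ a, p a ≠ 0) (hp1 : ∑ a, p a = 1) (c k : ℝ) :
    ∑ a, p a * (f a - c / (Fintype.card A * p a) - k) = ∑ a, p a * f a - c - k := by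
  have hA : (Fintype.card A : ℝ) ≠ 0 := by positivity
  have hterm : ∀ a, p a * (f a - c / (Fintype.card A * p a) - k)
      = p a * f a - c / Fintype.card A - p a * k := fun a => by
    field_simp [hp0 a]
  simp only [hterm, sum_sub_distrib, sum_const, card_univ, nsmul_eq_mul, ← sum_mul, hp1]
  field_simp

lemma log_sum_exp_log_add {S : Type*} [Fintype S] (d : S → ℝ) (hd0 : ∀ s, 0 < d s)
    (hd1 : ∑ s, d s = 1) (k : ℝ) :
    Real.log (∑ s, Real.exp (Real.log (d s) + k)) = k := by
  simp only [exp_add, exp_log (hd0 _), ← sum_mul, hd1, one_mul, log_exp]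

theorem stmt_2_general {S A : Type*} [Fintype S] [Nonempty S] [Fintype A] [Nonempty A]
    (d : S → ℝ) (pol : S → A → ℝ)
    (hd0 : ∀ s, 0 < d s) (hd1 : ∑ s, d s = 1)
    (hpol0 : ∀ s a, 0 < pol s a) (hpol1 : ∀ s, ∑ a, pol s a = 1)
    (r : S → A → ℝ) (α ε : ℝ) (hα : 0 < α)
    (rt : S → A → ℝ)
    (hrt : ∀ s a, rt s a =
      r s a - α * Real.log (d s) / ((Fintype.card A : ℝ) * pol s a)
        - ε - α * Real.log (Fintype.card S)) :
    α * Real.log (∑ s, Real.exp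
        (((∑ a, pol s a * r s a) - (∑ a, pol s a * rt s a)) / α))
      = ε + α * Real.log (Fintype.card S) ∧
    ∑ s, ∑ a, (d s * pol s a) * rt s a =
      (∑ s, ∑ a, (d s * pol s a) * r s a)
        + α * ((-∑ s, d s * Real.log (d s)) - Real.log (Fintype.card S)) - ε := by
  set k := ε + α * Real.log (Fintype.card S)
  have avg : ∀ s, ∑ a, pol s a * rt s a = ∑ a, pol s a * r s a - α * Real.log (d s) - k := by
    intro s
    simp only [hrt, sub_sub _ ε]
    exact sum_mul_sub_div_card_mul_sub _ _ (fun a => (hpol0 s a).ne') (hpol1 s) _ _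
  constructor
  · have hexp : ∀ s, (∑ a, pol s a * r s a - ∑ a, pol s a * rt s a) / α
        = Real.log (d s) + k / α := fun s => by
      rw [avg]
      field_simp
      ring
    simp only [hexp, log_sum_exp_log_add d hd0 hd1]
    field_simp
  · simp only [mul_assoc, ← mul_sum, avg, mul_sub, mul_left_comm (d _) α, sum_sub_distrib,
      ← sum_mul, hd1, one_mul]
    ring

/-- **The adversarial reward for state-entropy regularization.**
`r̃*(s,a) = r(s,a) − α·log(d s)/(|A|·π(a|s)) − ε − α·log |S|` saturates the LSE
constraint and attains the robust value
`∑ ρ r + α (H(d) − log |S|) − ε`. -/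
theorem stmt_2 {S A : Type*} [Fintype S] [Nonempty S] [Fintype A] [Nonempty A]
    (d : S → ℝ) (pol : S → A → ℝ)
    (hd0 : ∀ s, 0 < d s) (hd1 : ∑ s, d s = 1)
    (hpol0 : ∀ s a, 0 < pol s a) (hpol1 : ∀ s, ∑ a, pol s a = 1)
    (r : S → A → ℝ) (α ε : ℝ) (hα : 0 < α) (hε : 0 < ε)
    (rt : S → A → ℝ)
    (hrt : ∀ s a, rt s a =
      r s a - α * Real.log (d s) / ((Fintype.card A : ℝ) * pol s a)
        - ε - α * Real.log (Fintype.card S)) :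
    α * Real.log (∑ s, Real.exp
        (((∑ a, pol s a * r s a) - (∑ a, pol s a * rt s a)) / α))
      = ε + α * Real.log (Fintype.card S) ∧
    ∑ s, ∑ a, (d s * pol s a) * rt s a =
      (∑ s, ∑ a, (d s * pol s a) * r s a)
        + α * ((-∑ s, d s * Real.log (d s)) - Real.log (Fintype.card S)) - ε :=
  stmt_2_general d pol hd0 hd1 hpol0 hpol1 r α ε hα rt hrt
end

section
/- Let S and A be finite nonempty sets, d a probability vector on S with d(s) > 0 for all s, π(·|s) a probability vector on A with π(a|s) > 0 for all (s,a), and ρ(s,a) = d(s)·π(a|s). Let r : S×A → ℝ and α > 0, ε > 0. Then the infimum of Σ_{s,a} ρ(s,a)·r̃(s,a) over all r̃ : S×A → ℝ satisfying Σ_s d(s)·LSE_A((r(s,·) − r̃(s,·))/α) ≤ ε/α + log|A| equals Σ_{s,a} ρ(s,a)·r(s,a) − ε + α·(Σ_s d(s)·H(π(·|s)) − log|A|), and this infimum is attained by r̃(s,a) = r(s,a) − α·log π(a|s) − ε − α·log|A|. (Policy-entropy reward-robustness duality.) -/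
/-!
For each state `s`, Gibbs' variational inequality
`∑ₐ π(a|s) v(a) + H(π(·|s)) ≤ LSE_A(v)` applied to `v = (r(s,·) − r̃(s,·)) / α`, averaged against
`d` and combined with the constraint, gives `(∑ ρ r − ∑ ρ r̃) / α + E_d[H(π)] ≤ ε / α + log |A|`,
which is the lower bound. Equality holds in Gibbs' inequality exactly when `v = log π(·|s) + c`;
the proposed `r̃` is the choice making `c = ε / α + log |A|` for every state, so that the
constraint is active and the bound is attained.
-/

open Real Finset

section Gibbs

variable {ι : Type*} {s : Finset ι} {p : ι → ℝ}

/-- Jensen's inequality for `log` at the points `exp (v i) / p i`. -/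
theorem sum_mul_sub_sum_mul_log_le_log_sum_exp_s3 (hp : ∀ i ∈ s, 0 < p i)
    (hp1 : ∑ i ∈ s, p i = 1) (v : ι → ℝ) :
    ∑ i ∈ s, p i * v i - ∑ i ∈ s, p i * log (p i) ≤ log (∑ i ∈ s, exp (v i)) := by
  have jensen := strictConcaveOn_log_Ioi.concaveOn.le_map_sum (fun i hi => (hp i hi).le) hp1
    (p := fun i => exp (v i) / p i) fun i hi => div_pos (exp_pos _) (hp i hi)
  calc ∑ i ∈ s, p i * v i - ∑ i ∈ s, p i * log (p i)
      = ∑ i ∈ s, p i * log (exp (v i) / p i) := by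
        rw [← sum_sub_distrib]
        refine sum_congr rfl fun i hi => ?_
        rw [log_div (exp_pos _).ne' (hp i hi).ne', log_exp, mul_sub]
    _ ≤ log (∑ i ∈ s, p i * (exp (v i) / p i)) := jensen
    _ = log (∑ i ∈ s, exp (v i)) := by
        congr 1
        exact sum_congr rfl fun i hi => mul_div_cancel₀ _ (hp i hi).ne'

theorem log_sum_exp_log_add_s3 (hp : ∀ i ∈ s, 0 < p i) (hp1 : ∑ i ∈ s, p i = 1) (c : ℝ) :
    log (∑ i ∈ s, exp (log (p i) + c)) = c := by
  rw [sum_congr rfl fun i hi => by rw [exp_add, exp_log (hp i hi)], ← sum_mul, hp1, one_mul,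
    log_exp]

theorem sum_mul_add_mul_sub_const (hp1 : ∑ i ∈ s, p i = 1) (f g : ι → ℝ) (α c : ℝ) :
    ∑ i ∈ s, p i * (f i + α * g i - c) = ∑ i ∈ s, p i * f i + α * ∑ i ∈ s, p i * g i - c := by
  simp only [mul_sub, mul_add, sum_sub_distrib, sum_add_distrib, ← sum_mul, hp1, one_mul, mul_sum,
    mul_left_comm (p _) α]

end Gibbs

section Robustness

variable {S A : Type*} [Fintype S] [Fintype A] {d : S → ℝ} {pol : S → A → ℝ}

theorem sum_sum_mul_le_of_sum_mul_log_sum_exp_le (hd0 : ∀ s, 0 ≤ d s)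
    (hpol0 : ∀ s a, 0 < pol s a) (hpol1 : ∀ s, ∑ a, pol s a = 1) {α : ℝ} (hα : 0 < α)
    (r rt : S → A → ℝ) {C : ℝ} (h : ∑ s, d s * log (∑ a, exp ((r s a - rt s a) / α)) ≤ C) :
    ∑ s, ∑ a, d s * pol s a * r s a + α * ∑ s, d s * (-∑ a, pol s a * log (pol s a)) - α * C
      ≤ ∑ s, ∑ a, d s * pol s a * rt s a := by
  have averaged_gibbs :
      ∑ s, d s * (∑ a, pol s a * ((r s a - rt s a) / α) - ∑ a, pol s a * log (pol s a)) ≤ C :=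
    (sum_le_sum fun s _ => mul_le_mul_of_nonneg_left
      (sum_mul_sub_sum_mul_log_le_log_sum_exp_s3 (fun a _ => hpol0 s a) (hpol1 s) _)
      (hd0 s)).trans h
  have expand :
      ∑ s, d s * (∑ a, pol s a * ((r s a - rt s a) / α) - ∑ a, pol s a * log (pol s a))
        = (∑ s, ∑ a, d s * pol s a * r s a - ∑ s, ∑ a, d s * pol s a * rt s a) / α
          + ∑ s, d s * (-∑ a, pol s a * log (pol s a)) := by
    simp only [mul_sub, sub_div, sum_sub_distrib, mul_sum, sum_div, mul_neg, sum_neg_distrib,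
      mul_div_assoc', mul_assoc]
    ring
  have scaled := mul_le_mul_of_nonneg_left (expand ▸ averaged_gibbs) hα.le
  rw [mul_add, mul_div_cancel₀ _ hα.ne'] at scaled
  linarith

theorem sum_sum_mul_sub_mul_log_sub_const (hd1 : ∑ s, d s = 1)
    (hpol1 : ∀ s, ∑ a, pol s a = 1) (r : S → A → ℝ) (α c : ℝ) :
    ∑ s, ∑ a, d s * pol s a * (r s a - α * log (pol s a) - c)
      = ∑ s, ∑ a, d s * pol s a * r s a
        + α * ∑ s, d s * (-∑ a, pol s a * log (pol s a)) - c := by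
  have inner (s : S) : ∑ a, pol s a * (r s a - α * log (pol s a) - c)
      = ∑ a, pol s a * r s a + α * (-∑ a, pol s a * log (pol s a)) - c := by
    simpa [← sub_eq_add_neg, mul_neg, sum_neg_distrib]
      using sum_mul_add_mul_sub_const (hpol1 s) (r s) (fun a => -log (pol s a)) α c
  simp only [mul_assoc, ← mul_sum, inner]
  exact sum_mul_add_mul_sub_const hd1 _ _ α c

end Robustness

theorem stmt_3_general {S A : Type*} [Fintype S] [Fintype A]
    (d : S → ℝ) (pol : S → A → ℝ)
    (hd0 : ∀ s, 0 < d s) (hd1 : ∑ s, d s = 1)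
    (hpol0 : ∀ s a, 0 < pol s a) (hpol1 : ∀ s, ∑ a, pol s a = 1)
    (r : S → A → ℝ) (α ε : ℝ) (hα : 0 < α) :
    IsLeast
      { x : ℝ | ∃ rt : S → A → ℝ,
          (∑ s, d s * Real.log (∑ a, Real.exp ((r s a - rt s a) / α))
            ≤ ε / α + Real.log (Fintype.card A)) ∧
          x = ∑ s, ∑ a, (d s * pol s a) * rt s a }
      ((∑ s, ∑ a, (d s * pol s a) * r s a) - ε
        + α * ((∑ s, d s * (-∑ a, pol s a * Real.log (pol s a)))
            - Real.log (Fintype.card A))) ∧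
    (∑ s, d s * Real.log (∑ a, Real.exp
        ((r s a - (r s a - α * Real.log (pol s a) - ε - α * Real.log (Fintype.card A))) / α))
      ≤ ε / α + Real.log (Fintype.card A)) ∧
    (∑ s, ∑ a, (d s * pol s a) *
        (r s a - α * Real.log (pol s a) - ε - α * Real.log (Fintype.card A))
      = (∑ s, ∑ a, (d s * pol s a) * r s a) - ε
        + α * ((∑ s, d s * (-∑ a, pol s a * Real.log (pol s a)))
            - Real.log (Fintype.card A))) := by
  set L := log (Fintype.card A)
  have feasible : ∑ s, d s * log (∑ a, exp
      ((r s a - (r s a - α * log (pol s a) - ε - α * L)) / α)) ≤ ε / α + L := by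
    have arg (s : S) (a : A) : (r s a - (r s a - α * log (pol s a) - ε - α * L)) / α
        = log (pol s a) + (ε / α + L) := by
      field_simp
      ring
    have per_state (s : S) : log (∑ a, exp (log (pol s a) + (ε / α + L))) = ε / α + L :=
      log_sum_exp_log_add_s3 (fun a _ => hpol0 s a) (hpol1 s) _
    simp only [arg, per_state, ← sum_mul, hd1, one_mul, le_refl]
  have value : ∑ s, ∑ a, d s * pol s a * (r s a - α * log (pol s a) - ε - α * L)
      = ∑ s, ∑ a, d s * pol s a * r s a - ε
        + α * (∑ s, d s * (-∑ a, pol s a * log (pol s a)) - L) := by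
    simp only [sub_sub _ ε, sum_sum_mul_sub_mul_log_sub_const hd1 hpol1]
    ring
  refine ⟨⟨⟨_, feasible, value.symm⟩, ?_⟩, feasible, value⟩
  rintro _ ⟨rt, constraint, rfl⟩
  have bound := sum_sum_mul_le_of_sum_mul_log_sum_exp_le (fun s => (hd0 s).le) hpol0 hpol1 hα r rt
    constraint
  rw [mul_add, mul_div_cancel₀ _ hα.ne'] at bound
  linarith

/-- **Policy-entropy reward-robustness duality.**
The minimum of the perturbed return over the policy-entropy uncertainty set equals
`∑ ρ r − ε + α (E_d[H(π(·|s))] − log |A|)`, attained at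
`r̃(s,a) = r(s,a) − α log π(a|s) − ε − α log |A|`. -/
theorem stmt_3 {S A : Type*} [Fintype S] [Nonempty S] [Fintype A] [Nonempty A]
    (d : S → ℝ) (pol : S → A → ℝ)
    (hd0 : ∀ s, 0 < d s) (hd1 : ∑ s, d s = 1)
    (hpol0 : ∀ s a, 0 < pol s a) (hpol1 : ∀ s, ∑ a, pol s a = 1)
    (r : S → A → ℝ) (α ε : ℝ) (hα : 0 < α) (hε : 0 < ε) :
    IsLeast
      { x : ℝ | ∃ rt : S → A → ℝ,
          (∑ s, d s * Real.log (∑ a, Real.exp ((r s a - rt s a) / α))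
            ≤ ε / α + Real.log (Fintype.card A)) ∧
          x = ∑ s, ∑ a, (d s * pol s a) * rt s a }
      ((∑ s, ∑ a, (d s * pol s a) * r s a) - ε
        + α * ((∑ s, d s * (-∑ a, pol s a * Real.log (pol s a)))
            - Real.log (Fintype.card A))) ∧
    (∑ s, d s * Real.log (∑ a, Real.exp
        ((r s a - (r s a - α * Real.log (pol s a) - ε - α * Real.log (Fintype.card A))) / α))
      ≤ ε / α + Real.log (Fintype.card A)) ∧
    (∑ s, ∑ a, (d s * pol s a) *
        (r s a - α * Real.log (pol s a) - ε - α * Real.log (Fintype.card A))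
      = (∑ s, ∑ a, (d s * pol s a) * r s a) - ε
        + α * ((∑ s, d s * (-∑ a, pol s a * Real.log (pol s a)))
            - Real.log (Fintype.card A))) :=
  stmt_3_general d pol hd0 hd1 hpol0 hpol1 r α ε hα
end

section
/- Let X be a finite nonempty set, μ a probability vector on X with μ(x) > 0 for all x, r : X → ℝ, and α > 0, ε > 0. Then the infimum of Σ_x μ(x)·r̃(x) over all r̃ : X → ℝ satisfying LSE_X((r − r̃)/α) ≤ ε/α + log|X| equals Σ_x μ(x)·r(x) − ε + α·(H(μ) − log|X|), and this infimum is attained by r̃(x) = r(x) − α·log μ(x) − ε − α·log|X|. (Instantiated with X = S×A and μ the state–action occupancy, this is the state–action-entropy reward-robustness duality.) -/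
/-!
The constraint says that `u = (r - r̃)/α` has log-sum-exp at most `ε/α + log |X|`. By Gibbs'
inequality (Jensen for the concave `log` with weights `μ`), `∑ μ (u - log μ) ≤ LSE(u)`, which
rearranges to the claimed lower bound on `∑ μ r̃`. Equality in Jensen holds when `exp u` is
proportional to `μ`, i.e. `u = log μ + const`, and the constant is fixed by making the
constraint tight; this gives the minimiser.
-/

open Real Finset

theorem sum_mul_sub_log_le_log_sum_exp {X : Type*} [Fintype X]
    (μ : X → ℝ) (hμ0 : ∀ x, 0 < μ x) (hμ1 : ∑ x, μ x = 1) (u : X → ℝ) :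
    ∑ x, μ x * (u x - log (μ x)) ≤ log (∑ x, exp (u x)) := by
  have jensen := strictConcaveOn_log_Ioi.concaveOn.le_map_sum (t := univ) (w := μ)
    (p := fun x => exp (u x) / μ x) (fun x _ => (hμ0 x).le) hμ1
    (fun x _ => Set.mem_Ioi.2 (div_pos (exp_pos _) (hμ0 x)))
  simp only [smul_eq_mul] at jensen
  calc ∑ x, μ x * (u x - log (μ x))
      = ∑ x, μ x * log (exp (u x) / μ x) := by
        simp_rw [log_div (exp_ne_zero _) (hμ0 _).ne', log_exp]
    _ ≤ log (∑ x, μ x * (exp (u x) / μ x)) := jensen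
    _ = log (∑ x, exp (u x)) := by simp_rw [mul_div_cancel₀ _ (hμ0 _).ne']

theorem log_sum_exp_log_add_s4 {X : Type*} [Fintype X]
    (μ : X → ℝ) (hμ0 : ∀ x, 0 < μ x) (hμ1 : ∑ x, μ x = 1) (c : ℝ) :
    log (∑ x, exp (log (μ x) + c)) = c := by
  simp_rw [exp_add, exp_log (hμ0 _), ← sum_mul, hμ1, one_mul, log_exp]

theorem stmt_4_general {X : Type*} [Fintype X]
    (μ : X → ℝ) (hμ0 : ∀ x, 0 < μ x) (hμ1 : ∑ x, μ x = 1)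
    (r : X → ℝ) (α ε : ℝ) (hα : 0 < α) :
    IsLeast
      { v : ℝ | ∃ rt : X → ℝ,
          (Real.log (∑ x, Real.exp ((r x - rt x) / α))
            ≤ ε / α + Real.log (Fintype.card X)) ∧
          v = ∑ x, μ x * rt x }
      ((∑ x, μ x * r x) - ε
        + α * ((-∑ x, μ x * Real.log (μ x)) - Real.log (Fintype.card X))) ∧
    (Real.log (∑ x, Real.exp
        ((r x - (r x - α * Real.log (μ x) - ε - α * Real.log (Fintype.card X))) / α))
      ≤ ε / α + Real.log (Fintype.card X)) ∧
    (∑ x, μ x * (r x - α * Real.log (μ x) - ε - α * Real.log (Fintype.card X))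
      = (∑ x, μ x * r x) - ε
        + α * ((-∑ x, μ x * Real.log (μ x)) - Real.log (Fintype.card X))) := by
  have hfeasible : log (∑ x, exp
      ((r x - (r x - α * log (μ x) - ε - α * log (Fintype.card X))) / α))
      ≤ ε / α + log (Fintype.card X) := by
    have hshift : ∀ x, (r x - (r x - α * log (μ x) - ε - α * log (Fintype.card X))) / α
        = log (μ x) + (ε / α + log (Fintype.card X)) := fun x => by field_simp; ring
    simp_rw [hshift, log_sum_exp_log_add_s4 μ hμ0 hμ1, le_refl]
  have hvalue : ∑ x, μ x * (r x - α * log (μ x) - ε - α * log (Fintype.card X))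
      = (∑ x, μ x * r x) - ε + α * ((-∑ x, μ x * log (μ x)) - log (Fintype.card X)) := by
    simp only [mul_sub, sum_sub_distrib, ← sum_mul, hμ1, mul_left_comm (μ _) α, ← mul_sum]
    ring
  refine ⟨⟨⟨_, hfeasible, hvalue.symm⟩, ?_⟩, hfeasible, hvalue⟩
  rintro _ ⟨rt, hrt, rfl⟩
  have hgibbs := (sum_mul_sub_log_le_log_sum_exp μ hμ0 hμ1 (fun x => (r x - rt x) / α)).trans hrt
  have hexpand : ∑ x, μ x * ((r x - rt x) / α - log (μ x))
      = ((∑ x, μ x * r x) - ∑ x, μ x * rt x) / α - ∑ x, μ x * log (μ x) := by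
    simp only [mul_sub, mul_div_assoc', sum_sub_distrib, ← sum_div]
  have hscale : (ε / α + log (Fintype.card X)) * α = ε + α * log (Fintype.card X) := by
    field_simp
  rw [hexpand, sub_le_iff_le_add, div_le_iff₀ hα, add_mul, hscale] at hgibbs
  linarith

/-- **State–action-entropy reward-robustness duality (generic form).**
For a finite nonempty set `X`, a strictly positive probability vector `μ` and `r : X → ℝ`,
the minimum of `∑ μ r̃` over `r̃` with `LSE((r − r̃)/α) ≤ ε/α + log |X|` equals
`∑ μ r − ε + α (H(μ) − log |X|)`, attained at
`r̃(x) = r(x) − α log μ(x) − ε − α log |X|`. -/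
theorem stmt_4 {X : Type*} [Fintype X] [Nonempty X]
    (μ : X → ℝ) (hμ0 : ∀ x, 0 < μ x) (hμ1 : ∑ x, μ x = 1)
    (r : X → ℝ) (α ε : ℝ) (hα : 0 < α) (hε : 0 < ε) :
    IsLeast
      { v : ℝ | ∃ rt : X → ℝ,
          (Real.log (∑ x, Real.exp ((r x - rt x) / α))
            ≤ ε / α + Real.log (Fintype.card X)) ∧
          v = ∑ x, μ x * rt x }
      ((∑ x, μ x * r x) - ε
        + α * ((-∑ x, μ x * Real.log (μ x)) - Real.log (Fintype.card X))) ∧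
    (Real.log (∑ x, Real.exp
        ((r x - (r x - α * Real.log (μ x) - ε - α * Real.log (Fintype.card X))) / α))
      ≤ ε / α + Real.log (Fintype.card X)) ∧
    (∑ x, μ x * (r x - α * Real.log (μ x) - ε - α * Real.log (Fintype.card X))
      = (∑ x, μ x * r x) - ε
        + α * ((-∑ x, μ x * Real.log (μ x)) - Real.log (Fintype.card X))) :=
  stmt_4_general μ hμ0 hμ1 r α ε hα
end

section
/- Let S be a finite nonempty set and u : S → ℝ. Define g(α) = α·log((1/|S|)·Σ_s exp(u(s)/α)) for α > 0. Then g is antitone: for all 0 < α₁ ≤ α₂ one has g(α₂) ≤ g(α₁). Consequently, for any ε ∈ ℝ, the sets {u : g(α) ≤ ε} are non-decreasing in α. -/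
open Real Finset

/-
With `t = α₁ / α₂ ∈ (0, 1]` and `x = exp (u / α₁)` one has `exp (u / α₂) = x ^ t`, so Jensen's
inequality for the concave map `x ↦ x ^ t` gives `𝔼 exp (u / α₂) ≤ (𝔼 exp (u / α₁)) ^ t`; taking
logarithms and multiplying by `α₂` yields `g α₂ ≤ g α₁`. The sublevel sets then grow with `α`.
-/

lemma sum_mul_exp_pos {ι : Type*} {s : Finset ι} {w : ι → ℝ} (hw : ∀ i ∈ s, 0 ≤ w i)
    (hw' : ∑ i ∈ s, w i = 1) (v : ι → ℝ) : 0 < ∑ i ∈ s, w i * exp (v i) := by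
  obtain ⟨j, hj, hwj⟩ : ∃ j ∈ s, 0 < w j :=
    exists_lt_of_sum_lt (by simp [hw'] : ∑ _ ∈ s, (0 : ℝ) < ∑ i ∈ s, w i)
  exact sum_pos' (fun i hi => mul_nonneg (hw i hi) (exp_pos _).le)
    ⟨j, hj, mul_pos hwj (exp_pos _)⟩

lemma mul_log_sum_mul_exp_div_antitone {ι : Type*} (s : Finset ι) (w u : ι → ℝ)
    (hw : ∀ i ∈ s, 0 ≤ w i) (hw' : ∑ i ∈ s, w i = 1) {α₁ α₂ : ℝ} (hα₁ : 0 < α₁)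
    (hα : α₁ ≤ α₂) :
    α₂ * log (∑ i ∈ s, w i * exp (u i / α₂)) ≤ α₁ * log (∑ i ∈ s, w i * exp (u i / α₁)) := by
  have hα₂ : 0 < α₂ := hα₁.trans_le hα
  set t := α₁ / α₂
  have ht : t ∈ Set.Icc (0 : ℝ) 1 := ⟨by positivity, (div_le_one hα₂).mpr hα⟩
  have hpow : ∀ i, exp (u i / α₂) = exp (u i / α₁) ^ t := fun i => by
    rw [← exp_mul, div_mul_div_cancel₀ hα₁.ne']
  have jensen : ∑ i ∈ s, w i * exp (u i / α₂) ≤ (∑ i ∈ s, w i * exp (u i / α₁)) ^ t := by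
    simp only [hpow]
    exact (concaveOn_rpow ht.1 ht.2).le_map_sum hw hw' fun i _ => (exp_pos _).le
  calc α₂ * log (∑ i ∈ s, w i * exp (u i / α₂))
      ≤ α₂ * log ((∑ i ∈ s, w i * exp (u i / α₁)) ^ t) :=
        mul_le_mul_of_nonneg_left (log_le_log (sum_mul_exp_pos hw hw' _) jensen) hα₂.le
    _ = α₁ * log (∑ i ∈ s, w i * exp (u i / α₁)) := by
        rw [log_rpow (sum_mul_exp_pos hw hw' _), ← mul_assoc, mul_div_cancel₀ _ hα₂.ne']

/-- **Monotonicity of the temperature-indexed divergence.**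
`g(α) = α log((1/|S|) ∑ exp(u(s)/α))` is antitone in `α > 0`; consequently the
uncertainty sets `{u | g(α) ≤ ε}` are non-decreasing in `α`. -/
theorem stmt_5 {S : Type*} [Fintype S] [Nonempty S] :
    (∀ (u : S → ℝ) (α₁ α₂ : ℝ), 0 < α₁ → α₁ ≤ α₂ →
      α₂ * Real.log ((1 / (Fintype.card S : ℝ)) * ∑ s, Real.exp (u s / α₂))
        ≤ α₁ * Real.log ((1 / (Fintype.card S : ℝ)) * ∑ s, Real.exp (u s / α₁))) ∧
    (∀ (ε : ℝ) (α₁ α₂ : ℝ), 0 < α₁ → α₁ ≤ α₂ →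
      { u : S → ℝ |
          α₁ * Real.log ((1 / (Fintype.card S : ℝ)) * ∑ s, Real.exp (u s / α₁)) ≤ ε }
        ⊆ { u : S → ℝ |
          α₂ * Real.log ((1 / (Fintype.card S : ℝ)) * ∑ s, Real.exp (u s / α₂)) ≤ ε }) := by
  have hw' : ∑ _ : S, 1 / (Fintype.card S : ℝ) = 1 := by simp
  have antitone : ∀ (u : S → ℝ) (α₁ α₂ : ℝ), 0 < α₁ → α₁ ≤ α₂ →
      α₂ * Real.log ((1 / (Fintype.card S : ℝ)) * ∑ s, Real.exp (u s / α₂))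
        ≤ α₁ * Real.log ((1 / (Fintype.card S : ℝ)) * ∑ s, Real.exp (u s / α₁)) := by
    intro u α₁ α₂ hα₁ hα
    simp only [mul_sum]
    exact mul_log_sum_mul_exp_div_antitone univ _ u (fun _ _ => by positivity) hw' hα₁ hα
  exact ⟨antitone, fun ε α₁ α₂ hα₁ hα u hu => (antitone u α₁ α₂ hα₁ hα).trans hu⟩
end

section
/- Let S be a finite nonempty set, u : S → ℝ, and ε ∈ ℝ. Define g(α) = α·log((1/|S|)·Σ_s exp(u(s)/α)) for α > 0. Then g(α) ≤ ε holds for every α > 0 if and only if max_{s∈S} u(s) ≤ ε. (Characterization of the intersection over all temperatures of the induced uncertainty sets as an ℓ∞-type constraint.) -/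
open Real Finset

/-- **Intersection of uncertainty sets over all temperatures is an ℓ∞ constraint.**
`g(α) ≤ ε` for every `α > 0` iff `max_{s ∈ S} u(s) ≤ ε`. -/
theorem stmt_8 {S : Type*} [Fintype S] [Nonempty S] (u : S → ℝ) (ε : ℝ) :
    (∀ α : ℝ, 0 < α →
        α * Real.log ((1 / (Fintype.card S : ℝ)) * ∑ s, Real.exp (u s / α)) ≤ ε)
      ↔ Finset.univ.sup' Finset.univ_nonempty u ≤ ε := by
  have hn : (0:ℝ) < Fintype.card S := by exact_mod_cast Fintype.card_pos
  have hLn : 0 ≤ Real.log (Fintype.card S) :=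
    Real.log_nonneg (by exact_mod_cast Fintype.card_pos)
  have hsum : ∀ α : ℝ, (0:ℝ) < ∑ s, Real.exp (u s / α) :=
    fun α => Finset.sum_pos (fun s _ => Real.exp_pos _) Finset.univ_nonempty
  have hlog : ∀ α : ℝ, Real.log ((1 / (Fintype.card S : ℝ)) * ∑ s, Real.exp (u s / α))
      = Real.log (∑ s, Real.exp (u s / α)) - Real.log (Fintype.card S) := by
    intro α
    rw [Real.log_mul (by positivity) (hsum α).ne', one_div, Real.log_inv]
    ring
  constructor
  · intro h
    rw [Finset.sup'_le_iff]
    intro s _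
    by_contra hlt
    push_neg at hlt
    set δ := u s - ε with hδ
    have hδpos : 0 < δ := by linarith
    set α := δ / (Real.log (Fintype.card S) + 1) with hα
    have hαpos : 0 < α := by positivity
    have h1 := h α hαpos
    rw [hlog α] at h1
    have h2 : u s / α ≤ Real.log (∑ t, Real.exp (u t / α)) := by
      rw [← Real.log_exp (u s / α)]
      exact Real.log_le_log (Real.exp_pos _)
        (Finset.single_le_sum (fun t _ => (Real.exp_pos (u t / α)).le) (Finset.mem_univ s))
    have h3 : u s - α * Real.log (Fintype.card S) ≤ ε := by
      have h2' := mul_le_mul_of_nonneg_left h2 hαpos.le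
      rw [mul_div_cancel₀ _ hαpos.ne'] at h2'
      nlinarith
    have h4 : α * Real.log (Fintype.card S) < δ := by
      rw [hα, div_mul_eq_mul_div, div_lt_iff₀ (by positivity)]
      nlinarith
    linarith
  · intro h α hαpos
    set M := Finset.univ.sup' Finset.univ_nonempty u with hM
    have hb : ∑ t, Real.exp (u t / α) ≤ (Fintype.card S : ℝ) * Real.exp (M / α) := by
      calc ∑ t, Real.exp (u t / α) ≤ ∑ _t : S, Real.exp (M / α) :=
            Finset.sum_le_sum (fun t _ => Real.exp_le_exp.mpr (by
              gcongr
              exact Finset.le_sup' u (Finset.mem_univ t)))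
        _ = (Fintype.card S : ℝ) * Real.exp (M / α) := by
            rw [Finset.sum_const, Finset.card_univ, nsmul_eq_mul]
    have h2 : Real.log (∑ t, Real.exp (u t / α)) ≤ Real.log (Fintype.card S) + M / α := by
      calc Real.log (∑ t, Real.exp (u t / α))
          ≤ Real.log ((Fintype.card S : ℝ) * Real.exp (M / α)) :=
            Real.log_le_log (hsum α) hb
        _ = Real.log (Fintype.card S) + M / α := by
            rw [Real.log_mul hn.ne' (Real.exp_pos _).ne', Real.log_exp]
    rw [hlog α]
    have h3 : Real.log (∑ t, Real.exp (u t / α)) - Real.log (Fintype.card S) ≤ M / α := by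
      linarith
    have h4 := mul_le_mul_of_nonneg_left h3 hαpos.le
    rw [mul_div_cancel₀ _ hαpos.ne'] at h4
    linarith
end

section
/- Let S and A be finite nonempty sets, ρ and ρ̃ probability vectors on S×A with state marginals d(s) = Σ_a ρ(s,a) and d̃(s) = Σ_a ρ̃(s,a), and assume d(s) > 0 and d̃(s) > 0 for all s and that ρ̃(s,a)·d(s) = ρ(s,a)·d̃(s) for all (s,a) (the occupancy ratio depends only on the state). Let r : S×A → ℝ with r(s,a) > 0 for all (s,a), and let α > 0, ε > 0. If α·log((1/|S|)·Σ_s (d(s)/d̃(s))^{1/α}) ≤ ε, then Σ_{s,a} ρ̃(s,a)·r(s,a) ≥ exp( Σ_{s,a} ρ(s,a)·log r(s,a) + α·(H(d) − log|S|) − ε ). (Lower bound on performance under kernel uncertainty via state-entropy regularization.) -/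
/-!
Writing `ρ̃ = ρ · (d̃ / d)`, Jensen's inequality for `log` under the weights `ρ` gives
`log Σ ρ̃ r ≥ E_ρ[log r] − KL(d ‖ d̃)`. Jensen again, now under the weights `d` and applied to
`(d / d̃)^{1/α} / d`, bounds `KL(d ‖ d̃)` by `α log Σ (d / d̃)^{1/α} − α H(d)`, and the
hypothesis turns this into `ε + α (log |S| − H(d))`.
-/

open Real Finset

lemma sum_mul_pos_of_sum_eq_one {ι : Type*} [Fintype ι] {w p : ι → ℝ}
    (hw0 : ∀ i, 0 ≤ w i) (hw1 : ∑ i, w i = 1) (hp : ∀ i, 0 < p i) :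
    0 < ∑ i, w i * p i := by
  obtain ⟨i, -, hi⟩ := exists_ne_zero_of_sum_ne_zero (hw1.trans_ne one_ne_zero)
  exact sum_pos' (fun j _ => mul_nonneg (hw0 j) (hp j).le)
    ⟨i, mem_univ _, mul_pos ((hw0 i).lt_of_ne' hi) (hp i)⟩

lemma sum_mul_log_le_log_sum_mul {ι : Type*} [Fintype ι] {w p : ι → ℝ}
    (hw0 : ∀ i, 0 ≤ w i) (hw1 : ∑ i, w i = 1) (hp : ∀ i, 0 < p i) :
    ∑ i, w i * log (p i) ≤ log (∑ i, w i * p i) := by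
  simpa only [smul_eq_mul] using
    strictConcaveOn_log_Ioi.concaveOn.le_map_sum (t := univ) (fun i _ => hw0 i) hw1
      (fun i _ => hp i)

lemma sum_sum_mul_log_add_le_log_sum_sum_mul {S A : Type*} [Fintype S] [Fintype A]
    {ρ : S → A → ℝ} (hρ0 : ∀ s a, 0 ≤ ρ s a) (hρ1 : ∑ s, ∑ a, ρ s a = 1)
    {d c : S → ℝ} (hd : ∀ s, d s = ∑ a, ρ s a) (hc : ∀ s, 0 < c s)
    {r : S → A → ℝ} (hr : ∀ s a, 0 < r s a) :
    ∑ s, ∑ a, ρ s a * log (r s a) + ∑ s, d s * log (c s) ≤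
      log (∑ s, ∑ a, ρ s a * (c s * r s a)) := by
  have hsplit : ∀ s, ∑ a, ρ s a * log (r s a) + d s * log (c s) =
      ∑ a, ρ s a * log (c s * r s a) := by
    intro s
    rw [hd, sum_mul, ← sum_add_distrib]
    exact sum_congr rfl fun a _ => by rw [log_mul (hc s).ne' (hr s a).ne']; ring
  rw [← sum_add_distrib, sum_congr rfl fun s _ => hsplit s, ← Fintype.sum_prod_type',
    ← Fintype.sum_prod_type']
  exact sum_mul_log_le_log_sum_mul (fun i => hρ0 i.1 i.2) (by rwa [Fintype.sum_prod_type'])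
    (fun i => mul_pos (hc i.1) (hr i.1 i.2))

lemma sum_mul_log_le_mul_log_sum_rpow {ι : Type*} [Fintype ι] {d g : ι → ℝ}
    (hd0 : ∀ i, 0 < d i) (hd1 : ∑ i, d i = 1) (hg : ∀ i, 0 < g i) {α : ℝ} (hα : 0 < α) :
    ∑ i, d i * log (g i) ≤ α * log (∑ i, g i ^ (1 / α)) + α * ∑ i, d i * log (d i) := by
  have hjensen := sum_mul_log_le_log_sum_mul (fun i => (hd0 i).le) hd1
    (fun i => div_pos (rpow_pos_of_pos (hg i) (1 / α)) (hd0 i))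
  have hsum : ∑ i, d i * (g i ^ (1 / α) / d i) = ∑ i, g i ^ (1 / α) :=
    sum_congr rfl fun i _ => mul_div_cancel₀ _ (hd0 i).ne'
  have hlog : ∀ i, d i * log (g i) =
      α * (d i * log (g i ^ (1 / α) / d i)) + α * (d i * log (d i)) := by
    intro i
    rw [log_div (rpow_pos_of_pos (hg i) _).ne' (hd0 i).ne', log_rpow (hg i)]
    field_simp
    ring
  rw [sum_congr rfl fun i _ => hlog i, sum_add_distrib, ← mul_sum, ← mul_sum]
  gcongr
  rwa [← hsum]

theorem stmt_11_general {S A : Type*} [Fintype S] [Nonempty S] [Fintype A]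
    (ρ ρt : S → A → ℝ)
    (hρ0 : ∀ s a, 0 ≤ ρ s a) (hρ1 : ∑ s, ∑ a, ρ s a = 1)
    (hρt0 : ∀ s a, 0 ≤ ρt s a) (hρt1 : ∑ s, ∑ a, ρt s a = 1)
    (d dt : S → ℝ)
    (hd : ∀ s, d s = ∑ a, ρ s a)
    (hd0 : ∀ s, 0 < d s) (hdt0 : ∀ s, 0 < dt s)
    (hratio : ∀ s a, ρt s a * d s = ρ s a * dt s)
    (r : S → A → ℝ) (hr : ∀ s a, 0 < r s a)
    (α ε : ℝ) (hα : 0 < α)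
    (hcon : α * Real.log ((1 / (Fintype.card S : ℝ)) *
        ∑ s, (d s / dt s) ^ (1 / α)) ≤ ε) :
    ∑ s, ∑ a, ρt s a * r s a ≥
      Real.exp ((∑ s, ∑ a, ρ s a * Real.log (r s a))
        + α * ((-∑ s, d s * Real.log (d s)) - Real.log (Fintype.card S)) - ε) := by
  have hd1 : ∑ s, d s = 1 := by simpa only [← hd] using hρ1
  have hreturn : ∑ s, ∑ a, ρt s a * r s a = ∑ s, ∑ a, ρ s a * (dt s / d s * r s a) :=
    sum_congr rfl fun s _ => sum_congr rfl fun a _ => by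
      field_simp [(hd0 s).ne']
      linear_combination r s a * hratio s a
  have hreturn_pos : 0 < ∑ s, ∑ a, ρt s a * r s a := by
    rw [← Fintype.sum_prod_type'] at hρt1 ⊢
    exact sum_mul_pos_of_sum_eq_one (fun i => hρt0 i.1 i.2) hρt1 (fun i => hr i.1 i.2)
  have hjensen := sum_sum_mul_log_add_le_log_sum_sum_mul hρ0 hρ1 hd
    (fun s => div_pos (hdt0 s) (hd0 s)) hr
  have hkl := sum_mul_log_le_mul_log_sum_rpow hd0 hd1 (fun s => div_pos (hd0 s) (hdt0 s)) hα
  have hneg : ∑ s, d s * log (dt s / d s) = -∑ s, d s * log (d s / dt s) := by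
    simp only [← inv_div (d _), log_inv, mul_neg, sum_neg_distrib]
  have hcard : (0 : ℝ) < Fintype.card S := by exact_mod_cast Fintype.card_pos
  have hpow : 0 < ∑ s, (d s / dt s) ^ (1 / α) :=
    sum_pos (fun s _ => rpow_pos_of_pos (div_pos (hd0 s) (hdt0 s)) _) univ_nonempty
  rw [log_mul (by positivity) hpow.ne', one_div, log_inv] at hcon
  rw [ge_iff_le, ← exp_log hreturn_pos, exp_le_exp, hreturn]
  linarith

/-- **Lower bound on performance under kernel uncertainty via state-entropy
regularization.** If the perturbed occupancy `ρ̃` has the same conditional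
action distribution as `ρ` and its state marginal is close to that of `ρ` in the
temperature-`α` divergence, then the perturbed return is lower bounded by
`exp(E_ρ[log r] + α (H(d) − log |S|) − ε)`. -/
theorem stmt_11 {S A : Type*} [Fintype S] [Nonempty S] [Fintype A] [Nonempty A]
    (ρ ρt : S → A → ℝ)
    (hρ0 : ∀ s a, 0 ≤ ρ s a) (hρ1 : ∑ s, ∑ a, ρ s a = 1)
    (hρt0 : ∀ s a, 0 ≤ ρt s a) (hρt1 : ∑ s, ∑ a, ρt s a = 1)
    (d dt : S → ℝ)
    (hd : ∀ s, d s = ∑ a, ρ s a) (hdt : ∀ s, dt s = ∑ a, ρt s a)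
    (hd0 : ∀ s, 0 < d s) (hdt0 : ∀ s, 0 < dt s)
    (hratio : ∀ s a, ρt s a * d s = ρ s a * dt s)
    (r : S → A → ℝ) (hr : ∀ s a, 0 < r s a)
    (α ε : ℝ) (hα : 0 < α) (hε : 0 < ε)
    (hcon : α * Real.log ((1 / (Fintype.card S : ℝ)) *
        ∑ s, (d s / dt s) ^ (1 / α)) ≤ ε) :
    ∑ s, ∑ a, ρt s a * r s a ≥
      Real.exp ((∑ s, ∑ a, ρ s a * Real.log (r s a))
        + α * ((-∑ s, d s * Real.log (d s)) - Real.log (Fintype.card S)) - ε) :=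
  stmt_11_general ρ ρt hρ0 hρ1 hρt0 hρt1 d dt hd hd0 hdt0 hratio r hr α ε hα hcon
end

section
/- Let S and A be finite nonempty sets, ρ and ρ̃ probability vectors on S×A with state marginals d(s) = Σ_a ρ(s,a) and d̃(s) = Σ_a ρ̃(s,a), and assume d(s) > 0 and d̃(s) > 0 for all s and that ρ̃(s,a)·d(s) = ρ(s,a)·d̃(s) for all (s,a). Let r : S×A → ℝ with r(s,a) > 0 for all (s,a), and let α > 0, ε > 0. If α·log((1/|S|)·Σ_s (d(s)/d̃(s))^{1/α}) ≤ ε, then Σ_{s,a} ρ̃(s,a)·r(s,a) ≥ exp( Σ_{s,a} ρ(s,a)·log r(s,a) + α·(H_{S×A}(ρ) − log(|S|·|A|)) − ε ), where H_{S×A}(ρ) is the entropy of ρ as a distribution on S×A. (Lower bound on performance under kernel uncertainty via state–action-entropy regularization; it is weaker than the corresponding state-entropy bound.) -/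
open Real Finset

lemma jensen_exp {ι : Type*} [Fintype ι] (w z : ι → ℝ) (hw : ∀ i, 0 ≤ w i)
    (hw1 : ∑ i, w i = 1) (hz : ∀ i, 0 ≤ z i) (hz' : ∀ i, w i ≠ 0 → 0 < z i) :
    Real.exp (∑ i, w i * Real.log (z i)) ≤ ∑ i, w i * z i := by
  have h := Real.geom_mean_le_arith_mean_weighted Finset.univ w z
    (fun i _ => hw i) hw1 (fun i _ => hz i)
  refine le_trans (le_of_eq ?_) h
  rw [Real.exp_sum]
  refine Finset.prod_congr rfl fun i _ => ?_
  by_cases h0 : w i = 0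
  · simp [h0]
  · rw [Real.rpow_def_of_pos (hz' i h0), mul_comm]

/-- **Lower bound on performance under kernel uncertainty via state–action-entropy
regularization.** Same setting as the state-entropy bound, but with the (weaker)
regularizer `H_{S×A}(ρ) − log(|S|·|A|)`. -/
theorem stmt_12 {S A : Type*} [Fintype S] [Nonempty S] [Fintype A] [Nonempty A]
    (ρ ρt : S → A → ℝ)
    (hρ0 : ∀ s a, 0 ≤ ρ s a) (hρ1 : ∑ s, ∑ a, ρ s a = 1)
    (hρt0 : ∀ s a, 0 ≤ ρt s a) (hρt1 : ∑ s, ∑ a, ρt s a = 1)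
    (d dt : S → ℝ)
    (hd : ∀ s, d s = ∑ a, ρ s a) (hdt : ∀ s, dt s = ∑ a, ρt s a)
    (hd0 : ∀ s, 0 < d s) (hdt0 : ∀ s, 0 < dt s)
    (hratio : ∀ s a, ρt s a * d s = ρ s a * dt s)
    (r : S → A → ℝ) (hr : ∀ s a, 0 < r s a)
    (α ε : ℝ) (hα : 0 < α) (hε : 0 < ε)
    (hcon : α * Real.log ((1 / (Fintype.card S : ℝ)) *
        ∑ s, (d s / dt s) ^ (1 / α)) ≤ ε) :
    ∑ s, ∑ a, ρt s a * r s a ≥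
      Real.exp ((∑ s, ∑ a, ρ s a * Real.log (r s a))
        + α * ((-∑ s, ∑ a, ρ s a * Real.log (ρ s a))
            - Real.log ((Fintype.card S : ℝ) * (Fintype.card A : ℝ))) - ε) := by
  classical
  set w : S × A → ℝ := fun p => ρ p.1 p.2 with hw_def
  have hw0 : ∀ p, 0 ≤ w p := fun p => hρ0 p.1 p.2
  have hw1 : ∑ p : S × A, w p = 1 := by
    rw [Fintype.sum_prod_type]; exact hρ1
  -- positive ratio
  have hrat : ∀ s, 0 < d s / dt s := fun s => div_pos (hd0 s) (hdt0 s)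
  set c : S → ℝ := fun s => (d s / dt s) ^ (1 / α) with hc_def
  have hc0 : ∀ s, 0 < c s := fun s => Real.rpow_pos_of_pos (hrat s) _
  set T : ℝ := ∑ s, c s with hT_def
  have hT0 : 0 < T := Finset.sum_pos (fun s _ => hc0 s) Finset.univ_nonempty
  have hcardS : (0:ℝ) < (Fintype.card S : ℝ) := by positivity
  have hcardA : (0:ℝ) < (Fintype.card A : ℝ) := by positivity
  set L : ℝ := ∑ p : S × A, w p * Real.log (d p.1 / dt p.1) with hL_def
  set H : ℝ := -∑ p : S × A, w p * Real.log (w p) with hH_def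
  set R : ℝ := ∑ p : S × A, w p * Real.log (r p.1 p.2) with hR_def
  -- Gibbs step
  have gibbs : (1/α) * L + H ≤ Real.log ((Fintype.card A : ℝ) * T) := by
    have hz0 : ∀ p : S × A, 0 ≤ c p.1 / w p :=
      fun p => div_nonneg (hc0 p.1).le (hw0 p)
    have hz' : ∀ p : S × A, w p ≠ 0 → 0 < c p.1 / w p :=
      fun p hp => div_pos (hc0 p.1) (lt_of_le_of_ne (hw0 p) (Ne.symm hp))
    have hj := jensen_exp w (fun p => c p.1 / w p) hw0 hw1 hz0 hz'
    have hsum_le : ∑ p : S × A, w p * (c p.1 / w p) ≤ (Fintype.card A : ℝ) * T := by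
      have : ∑ p : S × A, w p * (c p.1 / w p) ≤ ∑ p : S × A, c p.1 := by
        refine Finset.sum_le_sum fun p _ => ?_
        by_cases h0 : w p = 0
        · simp [h0, (hc0 p.1).le]
        · rw [mul_div_cancel₀ _ h0]
      refine this.trans_eq ?_
      rw [Fintype.sum_prod_type]
      simp [Finset.sum_const, mul_comm, Finset.mul_sum, hT_def]
    have hexp_eq : ∑ p : S × A, w p * Real.log (c p.1 / w p) = (1/α) * L + H := by
      rw [hH_def, hL_def, Finset.mul_sum, ← sub_eq_add_neg, ← Finset.sum_sub_distrib]
      refine Finset.sum_congr rfl fun p _ => ?_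
      by_cases h0 : w p = 0
      · simp [h0]
      · rw [Real.log_div (hc0 p.1).ne' h0, hc_def,
          Real.log_rpow (hrat p.1)]
        ring
    have := hj.trans hsum_le
    rw [hexp_eq] at this
    calc (1/α) * L + H = Real.log (Real.exp ((1/α) * L + H)) := (Real.log_exp _).symm
      _ ≤ Real.log ((Fintype.card A : ℝ) * T) :=
        Real.log_le_log (Real.exp_pos _) this
  -- bound from hcon
  have hlogT : α * Real.log T ≤ ε + α * Real.log (Fintype.card S : ℝ) := by
    have : Real.log ((1 / (Fintype.card S : ℝ)) * T)
        = Real.log T - Real.log (Fintype.card S : ℝ) := by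
      rw [Real.log_mul (by positivity) hT0.ne', one_div,
        Real.log_inv]
      ring
    rw [this] at hcon
    nlinarith
  -- main bound on L
  have hLbound : L ≤ α * Real.log ((Fintype.card S : ℝ) * (Fintype.card A : ℝ))
      - α * H + ε := by
    have h1 : L ≤ α * (Real.log ((Fintype.card A : ℝ) * T) - H) := by
      have := mul_le_mul_of_nonneg_left gibbs hα.le
      have hαL : α * ((1/α) * L) = L := by field_simp
      nlinarith
    rw [Real.log_mul hcardA.ne' hT0.ne'] at h1
    rw [Real.log_mul hcardS.ne' hcardA.ne']
    nlinarith
  -- Jensen step for the main sum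
  have hz1 : ∀ p : S × A, 0 < dt p.1 / d p.1 * r p.1 p.2 :=
    fun p => mul_pos (div_pos (hdt0 p.1) (hd0 p.1)) (hr p.1 p.2)
  have hj := jensen_exp w (fun p => dt p.1 / d p.1 * r p.1 p.2) hw0 hw1
    (fun p => (hz1 p).le) (fun p _ => hz1 p)
  have hsum_eq : ∑ p : S × A, w p * (dt p.1 / d p.1 * r p.1 p.2)
      = ∑ s, ∑ a, ρt s a * r s a := by
    rw [Fintype.sum_prod_type]
    refine Finset.sum_congr rfl fun s _ => Finset.sum_congr rfl fun a _ => ?_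
    have hρt_eq : ρt s a = ρ s a * dt s / d s := by
      rw [eq_div_iff (hd0 s).ne']
      linarith [hratio s a]
    rw [hρt_eq, hw_def]
    ring
  have hlog_eq : ∑ p : S × A, w p * Real.log (dt p.1 / d p.1 * r p.1 p.2)
      = R - L := by
    rw [hR_def, hL_def, ← Finset.sum_sub_distrib]
    refine Finset.sum_congr rfl fun p _ => ?_
    rw [Real.log_mul (div_pos (hdt0 p.1) (hd0 p.1)).ne' (hr p.1 p.2).ne',
      Real.log_div (hdt0 p.1).ne' (hd0 p.1).ne']
    have : Real.log (d p.1 / dt p.1) = Real.log (d p.1) - Real.log (dt p.1) :=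
      Real.log_div (hd0 p.1).ne' (hdt0 p.1).ne'
    rw [this]; ring
  rw [hsum_eq, hlog_eq] at hj
  have hHeq : H = -∑ s, ∑ a, ρ s a * Real.log (ρ s a) := by
    rw [hH_def, Fintype.sum_prod_type]
  have hReq : R = ∑ s, ∑ a, ρ s a * Real.log (r s a) := by
    rw [hR_def, Fintype.sum_prod_type]
  rw [ge_iff_le, ← hHeq, ← hReq]
  refine le_trans (Real.exp_le_exp.mpr ?_) hj
  linarith
end

section
/- Define, for a finite outcome set X, a probability vector P on X, a return function G : X → ℝ, and a level β ∈ (0,1): CVaR_β(G; P) = inf over probability vectors Q on X with Q(x) ≤ P(x)/β for all x, of Σ_x Q(x)·G(x). Then: for every M > 0, β ∈ (0,1), q ∈ (0,1), R > 0, and ε > 0, there exist p ∈ (0,1) and R₃, R₄ ∈ ℝ with p·R₃ + (1−p)·R₄ = R − ε, such that the three-outcome distribution assigning probability q to return R, probability (1−q)·p to return R₃, and probability (1−q)·(1−p) to return R₄ satisfies CVaR_β ≤ −M; moreover, the point-mass distribution at return R satisfies CVaR_β = R. (Entropy regularization can degrade risk-averse performance arbitrarily.) -/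
open Real Finset

/-- Dual representation of CVaR at level `β` for a finite outcome distribution `P`
with return `G`: the infimum of `∑ Q(x) G(x)` over probability vectors `Q` with
`Q(x) ≤ P(x)/β`. -/
noncomputable def cvar {X : Type*} [Fintype X] (β : ℝ) (P G : X → ℝ) : ℝ :=
  sInf { v : ℝ | ∃ Q : X → ℝ, (∀ x, 0 ≤ Q x) ∧ (∑ x, Q x = 1) ∧
    (∀ x, Q x ≤ P x / β) ∧ v = ∑ x, Q x * G x }

/-!
Take `p = β`. Then `Q = (q, 1 - q, 0)` satisfies `Q ≤ P / β`, so the CVaR is at most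
`q R + (1 - q) R₃`, which ignores `R₄` entirely; choosing `R₃` very negative and `R₄`
to restore the mean `R - ε` of the risky branch makes it `-M`. For a point mass at `x₀`
the constraint `Q ≤ P / β` forces `Q` to be that point mass as well.
-/

section Cvar

variable {X : Type*} [Fintype X]

lemma bddBelow_cvar_set (β : ℝ) (P G : X → ℝ) :
    BddBelow { v : ℝ | ∃ Q : X → ℝ, (∀ x, 0 ≤ Q x) ∧ (∑ x, Q x = 1) ∧
      (∀ x, Q x ≤ P x / β) ∧ v = ∑ x, Q x * G x } := by
  refine ⟨-∑ y, |G y|, ?_⟩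
  rintro v ⟨Q, hQ0, hQ1, -, rfl⟩
  have hG : ∀ x, -∑ y, |G y| ≤ G x := fun x =>
    (neg_le_neg (single_le_sum (fun y _ => abs_nonneg (G y)) (mem_univ x))).trans
      (neg_abs_le (G x))
  calc -∑ y, |G y| = ∑ x, Q x * -∑ y, |G y| := by rw [← sum_mul, hQ1, one_mul]
    _ ≤ ∑ x, Q x * G x := sum_le_sum fun x _ => mul_le_mul_of_nonneg_left (hG x) (hQ0 x)

lemma cvar_le_sum_mul {β : ℝ} {P Q : X → ℝ} (G : X → ℝ) (hQ0 : ∀ x, 0 ≤ Q x)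
    (hQ1 : ∑ x, Q x = 1) (hQP : ∀ x, Q x ≤ P x / β) :
    cvar β P G ≤ ∑ x, Q x * G x :=
  csInf_le (bddBelow_cvar_set β P G) ⟨Q, hQ0, hQ1, hQP, rfl⟩

lemma cvar_pi_single [DecidableEq X] {β : ℝ} (hβ0 : 0 < β) (hβ1 : β ≤ 1) (x₀ : X)
    (G : X → ℝ) : cvar β (Pi.single x₀ 1) G = G x₀ := by
  have hsingle_nonneg : ∀ x, 0 ≤ (Pi.single x₀ 1 : X → ℝ) x := fun x => by
    rcases eq_or_ne x x₀ with rfl | hx <;> simp [*]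
  have hsingle_le : ∀ x, (Pi.single x₀ 1 : X → ℝ) x ≤ (Pi.single x₀ 1 : X → ℝ) x / β :=
    fun x => le_div_self (hsingle_nonneg x) hβ0 hβ1
  have hsingle_value : ∑ x, (Pi.single x₀ 1 : X → ℝ) x * G x = G x₀ := by
    simp [Pi.single_apply]
  apply le_antisymm
  · exact hsingle_value ▸ cvar_le_sum_mul G hsingle_nonneg (by simp) hsingle_le
  refine le_csInf ⟨G x₀, _, hsingle_nonneg, by simp, hsingle_le, hsingle_value.symm⟩ ?_
  rintro v ⟨Q, hQ0, hQ1, hQP, rfl⟩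
  have hQ_off : ∀ x ∈ univ, x ≠ x₀ → Q x = 0 := fun x _ hx =>
    le_antisymm (by simpa [hx] using hQP x) (hQ0 x)
  rw [sum_eq_single x₀ hQ_off (by simp)] at hQ1
  rw [sum_eq_single x₀ (fun x hx hne => by rw [hQ_off x hx hne, zero_mul]) (by simp), hQ1,
    one_mul]

end Cvar

theorem stmt_16_general (M β q R ε : ℝ) (hβ : β ∈ Set.Ioo (0:ℝ) 1)
    (hq : q ∈ Set.Ioo (0:ℝ) 1) :
    ∃ p ∈ Set.Ioo (0:ℝ) 1, ∃ R₃ R₄ : ℝ,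
      p * R₃ + (1 - p) * R₄ = R - ε ∧
      cvar β ![q, (1 - q) * p, (1 - q) * (1 - p)] ![R, R₃, R₄] ≤ -M ∧
      cvar β ![(1:ℝ), 0, 0] ![R, R₃, R₄] = R := by
  obtain ⟨hβ0, hβ1⟩ := hβ
  obtain ⟨hq0, hq1⟩ := hq
  have h1q : 0 < 1 - q := by linarith
  have h1β : 0 < 1 - β := by linarith
  set R₃ := -(M + q * R) / (1 - q)
  set R₄ := (R - ε - β * R₃) / (1 - β)
  refine ⟨β, ⟨hβ0, hβ1⟩, R₃, R₄, by rw [mul_div_cancel₀ _ h1β.ne']; ring, ?_, ?_⟩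
  · have hQ0 : ∀ x, 0 ≤ ![q, 1 - q, 0] x := by
      intro x; fin_cases x <;> simp <;> linarith
    have hQP : ∀ x, ![q, 1 - q, 0] x ≤ ![q, (1 - q) * β, (1 - q) * (1 - β)] x / β := by
      intro x; fin_cases x
      · simpa using le_div_self hq0.le hβ0 hβ1.le
      · simp [mul_div_assoc, div_self hβ0.ne']
      · simp only [Fin.reduceFinMk, Matrix.cons_val]; positivity
    calc _ ≤ ∑ x, ![q, 1 - q, 0] x * ![R, R₃, R₄] x :=
          cvar_le_sum_mul _ hQ0 (by simp [Fin.sum_univ_three]) hQP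
      _ = -M := by simp [Fin.sum_univ_three, R₃]; field_simp; ring
  · have hpoint : ![(1:ℝ), 0, 0] = Pi.single 0 1 := by
      ext i; fin_cases i <;> rfl
    rw [hpoint, cvar_pi_single hβ0 hβ1.le]
    rfl

/-- **Entropy regularization can degrade risk-averse performance arbitrarily.**
For every `M > 0`, `β, q ∈ (0,1)`, `R > 0` and `ε > 0`, there is a three-outcome
return distribution with mean of the risky branch equal to `R − ε` whose CVaR is
at most `−M`, whereas the point mass at `R` has CVaR equal to `R`. -/
theorem stmt_16 (M β q R ε : ℝ) (hM : 0 < M) (hβ : β ∈ Set.Ioo (0:ℝ) 1)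
    (hq : q ∈ Set.Ioo (0:ℝ) 1) (hR : 0 < R) (hε : 0 < ε) :
    ∃ p ∈ Set.Ioo (0:ℝ) 1, ∃ R₃ R₄ : ℝ,
      p * R₃ + (1 - p) * R₄ = R - ε ∧
      cvar β ![q, (1 - q) * p, (1 - q) * (1 - p)] ![R, R₃, R₄] ≤ -M ∧
      cvar β ![(1:ℝ), 0, 0] ![R, R₃, R₄] = R :=
  stmt_16_general M β q R ε hβ hq
end
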